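/- arXiv:0907.0243 — 3 statements merged into one kernel-verified Lean document; each statement's English description precedes it below -/
import Mathlib

section
/- If μ ∈ M_S and ν ∈ M_T are probability measures (on {0,1}^S and {0,1}^T with S, T disjoint), and both are antipodal pairs unimodal (APU), then the product measure μ × ν is APU. -/
open Finset

/-- Number of ones of `η ∈ {0,1}^n`. -/
def wt {n : ℕ} (η : Fin n → Bool) : ℕ := (univ.filter fun i => η i = true).card

/-- `γ_i(μ) = C(n,i)⁻¹ ∑_{|η|=i} μ(η) μ(1−η)`. -/
noncomputable def gamma {n : ℕ} (μ : (Fin n → Bool) → ℝ) (i : ℕ) : ℝ :=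
  ((n.choose i : ℝ))⁻¹ *
    ∑ η ∈ univ.filter (fun η : Fin n → Bool => wt η = i), μ η * μ (fun x => !η x)

/-- `γ_i(μ × ν)` for the product of measures on `{0,1}^n` and `{0,1}^m`. -/
noncomputable def gammaProd {n m : ℕ} (μ : (Fin n → Bool) → ℝ) (ν : (Fin m → Bool) → ℝ)
    (i : ℕ) : ℝ :=
  (((n + m).choose i : ℝ))⁻¹ *
    ∑ p ∈ (univ ×ˢ univ).filter
        (fun p : (Fin n → Bool) × (Fin m → Bool) => wt p.1 + wt p.2 = i),
      (μ p.1 * ν p.2) * (μ (fun x => !p.1 x) * ν (fun x => !p.2 x))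

/-- `(b 0, …, b n)` is unimodal. -/
def UnimodalOn (b : ℕ → ℝ) (n : ℕ) : Prop :=
  ∃ m ≤ n, (∀ i, i < m → b i ≤ b (i + 1)) ∧ (∀ i, m ≤ i → i < n → b (i + 1) ≤ b i)

set_option maxHeartbeats 1000000
set_option linter.constructorNameAsVariable false
set_option linter.unusedVariables false

/-- step: for K ≤ L, C(K,q+1) C(L,q) ≤ C(K,q) C(L,q+1) -/
lemma choose_step {K L : ℕ} (h : K ≤ L) (q : ℕ) :
    K.choose (q+1) * L.choose q ≤ K.choose q * L.choose (q+1) := by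
  have h1 : K.choose (q+1) * L.choose q * (q+1) ≤ K.choose q * L.choose (q+1) * (q+1) := by
    calc K.choose (q+1) * L.choose q * (q+1)
        = (K.choose (q+1) * (q+1)) * L.choose q := by ring
      _ = (K.choose q * (K - q)) * L.choose q := by rw [Nat.choose_succ_right_eq]
      _ ≤ (K.choose q * (L - q)) * L.choose q := by
          exact Nat.mul_le_mul_right _ (Nat.mul_le_mul_left _ (Nat.sub_le_sub_right h q))
      _ = (L.choose q * (L - q)) * K.choose q := by ring
      _ = (L.choose (q+1) * (q+1)) * K.choose q := by rw [Nat.choose_succ_right_eq]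
      _ = K.choose q * L.choose (q+1) * (q+1) := by ring
  exact Nat.le_of_mul_le_mul_right h1 (Nat.succ_pos q)

/-- classical rearrangement: p ≤ q, K ≤ L ⟹ C(K,q)C(L,p) ≤ C(K,p)C(L,q) -/
lemma choose_rearrange {K L p q : ℕ} (hKL : K ≤ L) (hpq : p ≤ q) :
    K.choose q * L.choose p ≤ K.choose p * L.choose q := by
  induction q with
  | zero => interval_cases p; rfl
  | succ q ih =>
    rcases Nat.lt_or_ge p (q+1) with hp | hp
    · have hpq' : p ≤ q := Nat.lt_succ_iff.mp hp
      have IH := ih hpq'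
      rcases Nat.eq_zero_or_pos (K.choose q) with h0 | h0
      · have : K < q := Nat.choose_eq_zero_iff.mp h0
        have : K.choose (q+1) = 0 := Nat.choose_eq_zero_of_lt (by omega)
        simp [this]
      · rcases Nat.eq_zero_or_pos (L.choose (q+1)) with h1 | h1
        · have hLq : L < q + 1 := Nat.choose_eq_zero_iff.mp h1
          have : K.choose (q+1) = 0 := Nat.choose_eq_zero_of_lt (by omega)
          simp [this]
        · have hLq : q + 1 ≤ L := by
            by_contra hc
            exact absurd (Nat.choose_eq_zero_of_lt (by omega)) (by omega : ¬ L.choose (q+1) = 0)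
          have hLqpos : 0 < L.choose q := Nat.choose_pos (by omega)
          have key : K.choose (q+1) * L.choose p * (K.choose q * L.choose q)
              ≤ K.choose p * L.choose (q+1) * (K.choose q * L.choose q) := by
            have st := choose_step hKL q
            calc K.choose (q+1) * L.choose p * (K.choose q * L.choose q)
                = (K.choose (q+1) * L.choose q) * (K.choose q * L.choose p) := by ring
              _ ≤ (K.choose q * L.choose (q+1)) * (K.choose p * L.choose q) :=
                  Nat.mul_le_mul st IH
              _ = K.choose p * L.choose (q+1) * (K.choose q * L.choose q) := by ring
          exact Nat.le_of_mul_le_mul_right key (Nat.mul_pos h0 hLqpos)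
    · have : p = q + 1 := by omega
      subst this; rfl

/-- symmetric + half-monotone implies comparison -/
lemma half_mono_compare {b : ℕ → ℝ} {m : ℕ}
    (hsym : ∀ u ≤ m, b u = b (m - u))
    (hmono : ∀ u, 2*u < m → b u ≤ b (u+1)) :
    ∀ x y, y ≤ x → x + y ≤ m → b y ≤ b x := by
  have main : ∀ d y, (y + d) + y ≤ m → b y ≤ b (y + d) := by
    intro d
    induction d with
    | zero => intro y _; simp
    | succ d ih =>
      intro y hy
      rcases Nat.lt_or_ge ((y + (d+1)) + y) m with hlt | hge
      · have h1 : b y ≤ b (y + 1) := hmono y (by omega)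
        have h2 : b (y+1) ≤ b ((y+1) + d) := ih (y+1) (by omega)
        have : (y+1) + d = y + (d+1) := by omega
        rw [this] at h2; linarith
      · have hxy : (y + (d+1)) + y = m := by omega
        have : b (y + (d+1)) = b (m - (y + (d+1))) := hsym _ (by omega)
        have hmy : m - (y + (d+1)) = y := by omega
        rw [hmy] at this; rw [this]
  intro x y hyx hxm
  have : x = y + (x - y) := by omega
  rw [this]; exact main (x - y) y (by omega)

lemma wt_le {n : ℕ} (η : Fin n → Bool) : wt η ≤ n := by
  unfold wt
  calc (univ.filter fun i => η i = true).card ≤ (univ : Finset (Fin n)).card :=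
        Finset.card_filter_le _ _
    _ = n := by simp

lemma wt_not {n : ℕ} (η : Fin n → Bool) : wt (fun x => !η x) = n - wt η := by
  have h : wt η + wt (fun x => !η x) = n := by
    unfold wt
    have : (univ.filter fun i => (!η i) = true) = univ.filter fun i => ¬ (η i = true) := by
      apply Finset.filter_congr
      intro i _
      simp
    rw [this, Finset.card_filter_add_card_filter_not]
    simp
  omega

lemma not_not_eta {n : ℕ} (η : Fin n → Bool) : (fun x => !(!η x)) = η := by
  funext x; simp

lemma gamma_nonneg {n : ℕ} (μ : (Fin n → Bool) → ℝ) (hpos : ∀ η, 0 ≤ μ η) (i : ℕ) :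
    0 ≤ gamma μ i := by
  unfold gamma
  apply mul_nonneg (by positivity)
  exact Finset.sum_nonneg fun η _ => mul_nonneg (hpos η) (hpos _)

lemma gamma_symm {n : ℕ} (μ : (Fin n → Bool) → ℝ) {j : ℕ} (hj : j ≤ n) :
    gamma μ j = gamma μ (n - j) := by
  unfold gamma
  rw [Nat.choose_symm hj]
  congr 1
  apply Finset.sum_nbij' (fun η => (fun x => !η x)) (fun η => (fun x => !η x))
  · intro η hη
    simp only [Finset.mem_filter, Finset.mem_univ, true_and] at hη ⊢
    rw [wt_not, hη]
  · intro η hη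
    simp only [Finset.mem_filter, Finset.mem_univ, true_and] at hη ⊢
    rw [wt_not, hη]
    omega
  · intro η _; exact not_not_eta η
  · intro η _; exact not_not_eta η
  · intro η _
    rw [not_not_eta]
    ring

lemma unimodal_halfmono (c : ℕ → ℝ) (n : ℕ)
    (hu : ∃ m ≤ n, (∀ i, i < m → c i ≤ c (i + 1)) ∧ (∀ i, m ≤ i → i < n → c (i + 1) ≤ c i))
    (hs : ∀ j ≤ n, c j = c (n - j)) :
    ∀ t, 2*t < n → c t ≤ c (t+1) := by
  obtain ⟨mo, hmo, hup, hdn⟩ := hu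
  intro t ht
  rcases Nat.lt_or_ge t mo with h | h
  · exact hup t h
  · have e1 : c t = c (n - t) := hs t (by omega)
    have e2 : c (t+1) = c (n - (t+1)) := hs (t+1) (by omega)
    have h3 : c (n - t - 1 + 1) ≤ c (n - t - 1) := hdn (n - t - 1) (by omega) (by omega)
    have e3 : n - t - 1 + 1 = n - t := by omega
    have e4 : n - (t+1) = n - t - 1 := by omega
    rw [e3] at h3
    rw [e1, e2, e4]
    exact h3

lemma flag_identity (n m j l : ℕ) (hj : j ≤ n) (hl : l ≤ m) :
    (n+m).choose n * (n.choose j * m.choose l)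
    = (n+m).choose (j+l) * ((j+l).choose j * ((n+m-(j+l)).choose (n-j))) := by
  set N := n + m
  set i := j + l with hi
  have hiN : i ≤ N := by omega
  have K := j.factorial * ((n-j).factorial * (l.factorial * (m-l).factorial))
  apply Nat.eq_of_mul_eq_mul_right
    (show 0 < j.factorial * ((n-j).factorial * (l.factorial * (m-l).factorial)) by positivity)
  have h1 : n.choose j * j.factorial * (n-j).factorial = n.factorial :=
    Nat.choose_mul_factorial_mul_factorial hj
  have h2 : m.choose l * l.factorial * (m-l).factorial = m.factorial :=
    Nat.choose_mul_factorial_mul_factorial hl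
  have h3 : N.choose n * n.factorial * (N-n).factorial = N.factorial :=
    Nat.choose_mul_factorial_mul_factorial (by omega)
  have h4 : N.choose i * i.factorial * (N-i).factorial = N.factorial :=
    Nat.choose_mul_factorial_mul_factorial hiN
  have h5 : i.choose j * j.factorial * (i-j).factorial = i.factorial :=
    Nat.choose_mul_factorial_mul_factorial (by omega)
  have h6 : (N-i).choose (n-j) * (n-j).factorial * ((N-i)-(n-j)).factorial = (N-i).factorial :=
    Nat.choose_mul_factorial_mul_factorial (by omega)
  have e1 : N - n = m := by omega
  have e2 : i - j = l := by omega
  have e3 : (N-i) - (n-j) = m - l := by omega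
  rw [e1] at h3; rw [e2] at h5; rw [e3] at h6
  calc N.choose n * (n.choose j * m.choose l)
        * (j.factorial * ((n-j).factorial * (l.factorial * (m-l).factorial)))
      = (n.choose j * j.factorial * (n-j).factorial)
        * ((m.choose l * l.factorial * (m-l).factorial)) * N.choose n := by ring
    _ = n.factorial * m.factorial * N.choose n := by rw [h1, h2]
    _ = (N.choose n * n.factorial * m.factorial) := by ring
    _ = N.factorial := h3
    _ = N.choose i * i.factorial * (N-i).factorial := h4.symm
    _ = N.choose i * (i.choose j * j.factorial * l.factorial)
        * ((N-i).choose (n-j) * (n-j).factorial * ((m-l).factorial)) := by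
        rw [h5, h6]
    _ = N.choose i * (i.choose j * (N-i).choose (n-j))
        * (j.factorial * ((n-j).factorial * (l.factorial * (m-l).factorial))) := by ring

lemma key_nonneg (n m k : ℕ) (h2k : 2*k < n + m)
    (D B : ℕ → ℝ)
    (hDsym : ∀ t, t < n → D (n-1-t) = - D t)
    (hDpos : ∀ t, 2*t < n → 0 ≤ D t)
    (hBpos : ∀ z, 0 ≤ B z)
    (hBcmp : ∀ x y, y ≤ x → x + y ≤ m → B y ≤ B x) :
    0 ≤ ∑ t ∈ range n, ((k.choose t : ℝ) * ((n+m-1-k).choose (n-1-t) : ℝ)) * (D t * B (k - t)) := by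
  set L := n + m - 1 - k with hL
  set f : ℕ → ℝ := fun t => ((k.choose t : ℝ) * (L.choose (n-1-t) : ℝ)) * (D t * B (k - t)) with hf
  have pairpos : ∀ t, t < n → 2*t < n → 0 ≤ f t + f (n-1-t) := by
    intro t htn h2t
    have htq : t ≤ n-1-t := by omega
    have hq : n-1-(n-1-t) = t := by omega
    have hDq : D (n-1-t) = - D t := hDsym t htn
    have hDt : 0 ≤ D t := hDpos t h2t
    simp only [hf, hq, hDq]
    rcases Nat.lt_or_ge k (n-1-t) with hk | hk
    · -- C(k, n-1-t) = 0
      have : k.choose (n-1-t) = 0 := Nat.choose_eq_zero_of_lt hk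
      rw [this]
      push_cast
      have : (0:ℝ) ≤ (k.choose t : ℝ) * (L.choose (n-1-t) : ℝ) * (D t * B (k - t)) := by
        apply mul_nonneg (by positivity)
        exact mul_nonneg hDt (hBpos _)
      nlinarith [this]
    · -- main case: n-1-t ≤ k
      have hkL : k ≤ L := by omega
      have hbin := choose_rearrange hkL htq (K := k) (L := L)
      have hbinR : ((k.choose (n-1-t) : ℝ) * (L.choose t : ℝ))
          ≤ ((k.choose t : ℝ) * (L.choose (n-1-t) : ℝ)) := by exact_mod_cast hbin
      have hx : k - (n-1-t) ≤ k - t := by omega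
      have hxy : (k - t) + (k - (n-1-t)) ≤ m := by omega
      have hB := hBcmp (k - t) (k - (n-1-t)) hx hxy
      have hBy := hBpos (k - (n-1-t))
      have hA2 : (0:ℝ) ≤ (k.choose (n-1-t) : ℝ) * (L.choose t : ℝ) := by positivity
      -- goal: 0 ≤ A1 * (D t * B (k-t)) + A2 * (-D t * B (k-(n-1-t)))
      have hbr : (k.choose (n-1-t) : ℝ) * (L.choose t : ℝ) * B (k - (n-1-t))
          ≤ (k.choose t : ℝ) * (L.choose (n-1-t) : ℝ) * B (k - t) := by
        calc (k.choose (n-1-t) : ℝ) * (L.choose t : ℝ) * B (k - (n-1-t))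
            ≤ (k.choose (n-1-t) : ℝ) * (L.choose t : ℝ) * B (k - t) := by
              exact mul_le_mul_of_nonneg_left hB hA2
          _ ≤ (k.choose t : ℝ) * (L.choose (n-1-t) : ℝ) * B (k - t) := by
              exact mul_le_mul_of_nonneg_right hbinR (hBpos _)
      nlinarith [hbr, hDt]
  have refl : ∑ t ∈ range n, f t = ∑ t ∈ range n, f (n-1-t) := (Finset.sum_range_reflect f n).symm
  have two : (2:ℝ) * ∑ t ∈ range n, f t = ∑ t ∈ range n, (f t + f (n-1-t)) := by
    rw [Finset.sum_add_distrib, ← refl]; ring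
  have h2 : 0 ≤ (2:ℝ) * ∑ t ∈ range n, f t := by
    rw [two]
    apply Finset.sum_nonneg
    intro t ht
    have htn := Finset.mem_range.mp ht
    rcases Nat.lt_or_ge (2*t) n with h2t | h2t
    · exact pairpos t htn h2t
    · have h2t' : 2*(n-1-t) < n := by omega
      have h1 : n-1-(n-1-t) = t := by omega
      have := pairpos (n-1-t) (by omega) h2t'
      rw [h1] at this; linarith
  linarith

lemma collapse (P Q k : ℕ) (hk : k ≤ P + Q) (A B : ℕ → ℝ) :
    ∑ t ∈ range (P+1), ((k.choose t : ℝ) * ((P+Q-k).choose (P-t) : ℝ)) * (A t * B (k-t))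
    = ∑ t ∈ range (P+1), ∑ u ∈ range (Q+1),
        if t + u = k then ((k.choose t : ℝ) * ((P+Q-k).choose (P-t) : ℝ)) * (A t * B u) else 0 := by
  apply Finset.sum_congr rfl
  intro t ht
  have htP := Finset.mem_range.mp ht
  rcases Nat.lt_or_ge k t with hkt | hkt
  · -- t > k : C(k,t) = 0 and condition never holds
    have h0 : k.choose t = 0 := Nat.choose_eq_zero_of_lt hkt
    rw [h0]
    rw [Finset.sum_eq_zero]
    · simp
    · intro u _
      have : ¬ (t + u = k) := by omega
      simp [this]
  · -- t ≤ k
    have hcond : ∀ u, t + u = k ↔ u = k - t := by intro u; omega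
    have : (∑ u ∈ range (Q+1), if t + u = k
          then ((k.choose t : ℝ) * ((P+Q-k).choose (P-t) : ℝ)) * (A t * B u) else 0)
        = ∑ u ∈ range (Q+1), if u = k - t
          then ((k.choose t : ℝ) * ((P+Q-k).choose (P-t) : ℝ)) * (A t * B u) else 0 := by
      apply Finset.sum_congr rfl; intro u _; simp only [hcond u]
    rw [this, Finset.sum_ite_eq' (range (Q+1)) (k-t)
      (fun u => ((k.choose t : ℝ) * ((P+Q-k).choose (P-t) : ℝ)) * (A t * B u))]
    by_cases hmem : k - t ∈ range (Q+1)
    · simp [hmem]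
    · have hQ : Q < k - t := by
        rw [Finset.mem_range, Nat.lt_succ_iff, not_le] at hmem; exact hmem
      have h0 : (P+Q-k).choose (P-t) = 0 := Nat.choose_eq_zero_of_lt (by omega)
      simp [hmem, h0]

lemma sum_swap (A B : ℕ → ℝ) (P Q k : ℕ) (hk : k ≤ P + Q) :
    ∑ t ∈ range (P+1), ((k.choose t : ℝ) * ((P+Q-k).choose (P-t) : ℝ)) * (A t * B (k-t))
    = ∑ u ∈ range (Q+1), ((k.choose u : ℝ) * ((P+Q-k).choose (Q-u) : ℝ)) * (B u * A (k-u)) := by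
  rw [collapse P Q k hk A B]
  have h2 := collapse Q P k (by omega) B A
  rw [show Q + P - k = P + Q - k by omega] at h2
  rw [h2, Finset.sum_comm]
  apply Finset.sum_congr rfl; intro u hu
  apply Finset.sum_congr rfl; intro t ht
  have htP := Finset.mem_range.mp ht
  have huQ := Finset.mem_range.mp hu
  by_cases hc : t + u = k
  · have hc' : u + t = k := by omega
    simp only [hc, hc', if_true]
    have hkt : t ≤ k := by omega
    have e1 : k.choose t = k.choose u := by
      have : k - t = u := by omega
      rw [← this, Nat.choose_symm hkt]

    have e2 : (P+Q-k).choose (P-t) = (P+Q-k).choose (Q-u) := by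
      have hle : P - t ≤ P + Q - k := by omega
      have : P + Q - k - (P - t) = Q - u := by omega
      rw [← Nat.choose_symm hle, this]
    rw [e1, e2]; ring
  · have hc' : ¬ (u + t = k) := by omega
    simp [hc, hc']

noncomputable def gg (a b : ℕ → ℝ) (n N i : ℕ) : ℝ :=
  ∑ t ∈ range (n+1), ((i.choose t : ℝ) * ((N-i).choose (n-t) : ℝ)) * (a t * b (i-t))

lemma gg_diff (a b : ℕ → ℝ) (n m k : ℕ) (hk : k < n + m) :
    gg a b n (n+m) (k+1) - gg a b n (n+m) k =
    (∑ t ∈ range (n+1), ((k.choose t : ℝ) * ((n+m-1-k).choose (n-t) : ℝ))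
        * (a t * (b (k+1-t) - b (k-t))))
    + (∑ t ∈ range n, ((k.choose t : ℝ) * ((n+m-1-k).choose (n-1-t) : ℝ))
        * ((a (t+1) - a t) * b (k-t))) := by
  set L := n + m - 1 - k with hLdef
  have hN1 : n + m - (k+1) = L := by omega
  have hN2 : n + m - k = L + 1 := by omega
  have claimA : gg a b n (n+m) (k+1)
      = (∑ t ∈ range (n+1), ((k.choose t : ℝ) * (L.choose (n-t) : ℝ)) * (a t * b (k+1-t)))
      + (∑ t ∈ range n, ((k.choose t : ℝ) * (L.choose (n-1-t) : ℝ)) * (a (t+1) * b (k-t))) := by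
    unfold gg
    rw [hN1]
    rw [Finset.sum_range_succ']
    have step : ∀ t ∈ range n,
        (((k+1).choose (t+1) : ℝ) * (L.choose (n-(t+1)) : ℝ)) * (a (t+1) * b (k+1-(t+1)))
        = ((k.choose (t+1) : ℝ) * (L.choose (n-(t+1)) : ℝ)) * (a (t+1) * b (k+1-(t+1)))
          + ((k.choose t : ℝ) * (L.choose (n-1-t) : ℝ)) * (a (t+1) * b (k-t)) := by
      intro t ht
      have e1 : (k+1).choose (t+1) = k.choose t + k.choose (t+1) := Nat.choose_succ_succ k t
      have e2 : n - (t+1) = n - 1 - t := by omega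
      have e3 : k + 1 - (t+1) = k - t := by omega
      rw [e1, e2, e3]; push_cast; ring
    rw [Finset.sum_congr rfl step, Finset.sum_add_distrib]
    have recomb : (∑ t ∈ range n, ((k.choose (t+1) : ℝ) * (L.choose (n-(t+1)) : ℝ))
          * (a (t+1) * b (k+1-(t+1))))
        + (((k+1).choose 0 : ℝ) * (L.choose (n-0) : ℝ)) * (a 0 * b (k+1-0))
        = ∑ t ∈ range (n+1), ((k.choose t : ℝ) * (L.choose (n-t) : ℝ)) * (a t * b (k+1-t)) := by
      rw [Finset.sum_range_succ' (fun t => ((k.choose t : ℝ) * (L.choose (n-t) : ℝ))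
        * (a t * b (k+1-t))) n]
      simp
    linarith [recomb]
  have claimB : gg a b n (n+m) k
      = (∑ t ∈ range (n+1), ((k.choose t : ℝ) * (L.choose (n-t) : ℝ)) * (a t * b (k-t)))
      + (∑ t ∈ range n, ((k.choose t : ℝ) * (L.choose (n-1-t) : ℝ)) * (a t * b (k-t))) := by
    unfold gg
    rw [hN2]
    rw [Finset.sum_range_succ]
    have step : ∀ t ∈ range n,
        ((k.choose t : ℝ) * ((L+1).choose (n-t) : ℝ)) * (a t * b (k-t))
        = ((k.choose t : ℝ) * (L.choose (n-t) : ℝ)) * (a t * b (k-t))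
          + ((k.choose t : ℝ) * (L.choose (n-1-t) : ℝ)) * (a t * b (k-t)) := by
      intro t ht
      have htn := Finset.mem_range.mp ht
      have e2 : n - t = (n - 1 - t) + 1 := by omega
      rw [e2, Nat.choose_succ_succ L (n-1-t)]
      push_cast; ring
    rw [Finset.sum_congr rfl step, Finset.sum_add_distrib]
    have recomb : (∑ t ∈ range n, ((k.choose t : ℝ) * (L.choose (n-t) : ℝ)) * (a t * b (k-t)))
        + ((k.choose n : ℝ) * ((L+1).choose (n-n) : ℝ)) * (a n * b (k-n))
        = ∑ t ∈ range (n+1), ((k.choose t : ℝ) * (L.choose (n-t) : ℝ)) * (a t * b (k-t)) := by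
      rw [Finset.sum_range_succ (fun t => ((k.choose t : ℝ) * (L.choose (n-t) : ℝ))
        * (a t * b (k-t))) n]
      simp
    linarith [recomb]
  rw [claimA, claimB]
  have e1 : ∑ t ∈ range (n+1), ((k.choose t : ℝ) * (L.choose (n-t) : ℝ))
      * (a t * (b (k+1-t) - b (k-t)))
      = (∑ t ∈ range (n+1), ((k.choose t : ℝ) * (L.choose (n-t) : ℝ)) * (a t * b (k+1-t)))
      - (∑ t ∈ range (n+1), ((k.choose t : ℝ) * (L.choose (n-t) : ℝ)) * (a t * b (k-t))) := by
    rw [← Finset.sum_sub_distrib]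
    apply Finset.sum_congr rfl; intro t _; ring
  have e2 : ∑ t ∈ range n, ((k.choose t : ℝ) * (L.choose (n-1-t) : ℝ))
      * ((a (t+1) - a t) * b (k-t))
      = (∑ t ∈ range n, ((k.choose t : ℝ) * (L.choose (n-1-t) : ℝ)) * (a (t+1) * b (k-t)))
      - (∑ t ∈ range n, ((k.choose t : ℝ) * (L.choose (n-1-t) : ℝ)) * (a t * b (k-t))) := by
    rw [← Finset.sum_sub_distrib]
    apply Finset.sum_congr rfl; intro t _; ring
  rw [e1, e2]; ring

lemma gamma_fiber_sum {n : ℕ} (μ : (Fin n → Bool) → ℝ) {j : ℕ} (hj : j ≤ n) :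
    ∑ η ∈ univ.filter (fun η : Fin n → Bool => wt η = j), μ η * μ (fun x => !η x)
    = (n.choose j : ℝ) * gamma μ j := by
  unfold gamma
  have h : (n.choose j : ℝ) ≠ 0 := by
    have := Nat.choose_pos hj
    positivity
  rw [← mul_assoc, mul_inv_cancel₀ h, one_mul]

lemma gammaProd_eq {n m : ℕ} (μ : (Fin n → Bool) → ℝ) (ν : (Fin m → Bool) → ℝ)
    {i : ℕ} (hi : i ≤ n + m) :
    gammaProd μ ν i = (((n+m).choose n : ℝ))⁻¹ * gg (gamma μ) (gamma ν) n (n+m) i := by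
  classical
  set N := n + m with hN
  set a := gamma μ
  set b := gamma ν
  set F : (Fin n → Bool) → ℝ := fun η => μ η * μ (fun x => !η x) with hF
  set G : (Fin m → Bool) → ℝ := fun η => ν η * ν (fun x => !η x) with hG
  set SA : ℕ → ℝ := fun j => ∑ η ∈ univ.filter (fun η : Fin n → Bool => wt η = j), F η with hSA
  set SB : ℕ → ℝ := fun l => ∑ η ∈ univ.filter (fun η : Fin m → Bool => wt η = l), G η with hSB
  set pairsum : ℝ := ∑ p ∈ (univ ×ˢ univ).filter
      (fun p : (Fin n → Bool) × (Fin m → Bool) => wt p.1 + wt p.2 = i),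
      (μ p.1 * ν p.2) * (μ (fun x => !p.1 x) * ν (fun x => !p.2 x)) with hpair
  -- Step A
  have stepA : pairsum = ∑ j ∈ range (n+1), ∑ l ∈ range (m+1),
      if j + l = i then SA j * SB l else 0 := by
    rw [hpair, Finset.sum_filter, Finset.sum_product]
    have inner1 : ∀ η1 : Fin n → Bool,
        (∑ η2 : Fin m → Bool, if wt η1 + wt η2 = i
          then (μ η1 * ν η2) * (μ (fun x => !η1 x) * ν (fun x => !η2 x)) else 0)
        = F η1 * ∑ η2 : Fin m → Bool, (if wt η1 + wt η2 = i then G η2 else 0) := by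
      intro η1
      rw [Finset.mul_sum]
      apply Finset.sum_congr rfl
      intro η2 _
      by_cases h : wt η1 + wt η2 = i
      · simp only [h, if_true, hF, hG]; ring
      · simp [h]
    have inner2 : ∀ j : ℕ,
        (∑ η2 : Fin m → Bool, (if j + wt η2 = i then G η2 else 0))
        = ∑ l ∈ range (m+1), if j + l = i then SB l else 0 := by
      intro j
      rw [← Finset.sum_fiberwise_of_maps_to (g := fun η2 : Fin m → Bool => wt η2)
        (t := range (m+1)) (fun η2 _ => Finset.mem_range.mpr (Nat.lt_succ_of_le (wt_le η2)))]
      apply Finset.sum_congr rfl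
      intro l _
      by_cases h : j + l = i
      · simp only [h, if_true, hSB]
        apply Finset.sum_congr rfl
        intro η2 hη2
        have : wt η2 = l := (Finset.mem_filter.mp hη2).2
        simp [this, h]
      · simp only [h, if_false]
        apply Finset.sum_eq_zero
        intro η2 hη2
        have : wt η2 = l := (Finset.mem_filter.mp hη2).2
        simp [this, h]
    calc (∑ η1 : Fin n → Bool, ∑ η2 : Fin m → Bool, if wt η1 + wt η2 = i
          then (μ η1 * ν η2) * (μ (fun x => !η1 x) * ν (fun x => !η2 x)) else 0)
        = ∑ η1 : Fin n → Bool, F η1 * ∑ η2 : Fin m → Bool,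
            (if wt η1 + wt η2 = i then G η2 else 0) := by
          exact Finset.sum_congr rfl fun η1 _ => inner1 η1
      _ = ∑ j ∈ range (n+1), ∑ η1 ∈ univ.filter (fun η1 : Fin n → Bool => wt η1 = j),
            (F η1 * ∑ η2 : Fin m → Bool, (if wt η1 + wt η2 = i then G η2 else 0)) := by
          rw [Finset.sum_fiberwise_of_maps_to (g := fun η1 : Fin n → Bool => wt η1)
            (t := range (n+1)) (fun η1 _ => Finset.mem_range.mpr (Nat.lt_succ_of_le (wt_le η1)))]
      _ = ∑ j ∈ range (n+1), ∑ l ∈ range (m+1), if j + l = i then SA j * SB l else 0 := by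
          apply Finset.sum_congr rfl
          intro j _
          have : ∀ η1 ∈ univ.filter (fun η1 : Fin n → Bool => wt η1 = j),
              (F η1 * ∑ η2 : Fin m → Bool, (if wt η1 + wt η2 = i then G η2 else 0))
              = F η1 * ∑ l ∈ range (m+1), (if j + l = i then SB l else 0) := by
            intro η1 hη1
            have hw : wt η1 = j := (Finset.mem_filter.mp hη1).2
            rw [hw, inner2 j]
          rw [Finset.sum_congr rfl this, ← Finset.sum_mul]
          rw [Finset.mul_sum]
          apply Finset.sum_congr rfl
          intro l _
          by_cases h : j + l = i
          · simp [h, hSA]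
          · simp [h]
  -- Step B
  have stepB : (N.choose n : ℝ) * pairsum = (N.choose i : ℝ) * gg a b n N i := by
    rw [stepA, Finset.mul_sum]
    have rhs : (N.choose i : ℝ) * gg a b n N i
        = ∑ j ∈ range (n+1), ∑ l ∈ range (m+1), if j + l = i
            then (N.choose i : ℝ) * (((i.choose j : ℝ) * ((N-i).choose (n-j) : ℝ)) * (a j * b l))
            else 0 := by
      unfold gg
      have hcol := collapse n m i (by omega) a b
      rw [show n + m - i = N - i from rfl] at hcol
      rw [hcol, Finset.mul_sum]
      apply Finset.sum_congr rfl
      intro j _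
      rw [Finset.mul_sum]
      apply Finset.sum_congr rfl
      intro l _
      by_cases h : j + l = i
      · simp only [h, if_true]
      · simp [h]
    rw [rhs]
    apply Finset.sum_congr rfl
    intro j hj
    rw [Finset.mul_sum]
    apply Finset.sum_congr rfl
    intro l hl
    have hjn : j ≤ n := Nat.lt_succ_iff.mp (Finset.mem_range.mp hj)
    have hlm : l ≤ m := Nat.lt_succ_iff.mp (Finset.mem_range.mp hl)
    by_cases h : j + l = i
    · simp only [h, if_true]
      have hSAj : SA j = (n.choose j : ℝ) * a j := gamma_fiber_sum μ hjn
      have hSBl : SB l = (m.choose l : ℝ) * b l := gamma_fiber_sum ν hlm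
      rw [hSAj, hSBl]
      have hflag := flag_identity n m j l hjn hlm
      rw [h] at hflag
      have hflagR : ((N.choose n : ℝ)) * ((n.choose j : ℝ) * (m.choose l : ℝ))
          = (N.choose i : ℝ) * ((i.choose j : ℝ) * ((N-i).choose (n-j) : ℝ)) := by
        exact_mod_cast hflag
      calc (N.choose n : ℝ) * ((n.choose j : ℝ) * a j * ((m.choose l : ℝ) * b l))
          = ((N.choose n : ℝ) * ((n.choose j : ℝ) * (m.choose l : ℝ))) * (a j * b l) := by ring
        _ = ((N.choose i : ℝ) * ((i.choose j : ℝ) * ((N-i).choose (n-j) : ℝ))) * (a j * b l) := by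
            rw [hflagR]
        _ = (N.choose i : ℝ) * (((i.choose j : ℝ) * ((N-i).choose (n-j) : ℝ)) * (a j * b l)) := by
            ring
    · simp [h]
  -- conclude
  have hNi : (N.choose i : ℝ) ≠ 0 := by
    have := Nat.choose_pos hi
    positivity
  have hNn : (N.choose n : ℝ) ≠ 0 := by
    have := Nat.choose_pos (show n ≤ N by omega)
    positivity
  unfold gammaProd
  rw [← hpair]
  rw [show ((n+m).choose i : ℝ) = (N.choose i : ℝ) from rfl]
  field_simp
  linarith [stepB]

lemma gg_symm (a b : ℕ → ℝ) (n m : ℕ)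
    (ha : ∀ j ≤ n, a j = a (n-j)) (hb : ∀ u ≤ m, b u = b (m-u))
    {i : ℕ} (hi : i ≤ n+m) :
    gg a b n (n+m) i = gg a b n (n+m) ((n+m)-i) := by
  have swap_i : gg a b n (n+m) i
      = ∑ u ∈ range (m+1), ((i.choose u : ℝ) * (((n+m)-i).choose (m-u) : ℝ)) * (b u * a (i-u)) :=
    sum_swap a b n m i hi
  have swap_Ni : gg a b n (n+m) ((n+m)-i)
      = ∑ u ∈ range (m+1), ((((n+m)-i).choose u : ℝ) * ((i).choose (m-u) : ℝ))
          * (b u * a ((n+m)-i-u)) := by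
    have h := sum_swap a b n m ((n+m)-i) (by omega)
    rw [show n+m-((n+m)-i) = i from by omega] at h
    unfold gg
    rw [show n+m-((n+m)-i) = i from by omega]
    exact h
  rw [swap_i, swap_Ni]
  rw [← Finset.sum_range_reflect
    (fun u => ((((n+m)-i).choose u : ℝ) * ((i).choose (m-u) : ℝ)) * (b u * a ((n+m)-i-u))) (m+1)]
  apply Finset.sum_congr rfl
  intro u hu
  have hum : u ≤ m := Nat.lt_succ_iff.mp (Finset.mem_range.mp hu)
  rw [show m + 1 - 1 - u = m - u from by omega]
  rw [show m - (m-u) = u from by omega]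
  rcases Nat.lt_or_ge i u with hiu | hiu
  · have h1 : i.choose u = 0 := Nat.choose_eq_zero_of_lt hiu
    rw [h1]; push_cast; ring
  · rcases Nat.lt_or_ge ((n+m)-i) (m-u) with hmu | hmu
    · have h1 : ((n+m)-i).choose (m-u) = 0 := Nat.choose_eq_zero_of_lt hmu
      rw [h1]; push_cast; ring
    · have e1 : b (m-u) = b u := (hb u hum).symm
      have e2 : (n+m)-i-(m-u) = n-(i-u) := by omega
      have e3 : a (n-(i-u)) = a (i-u) := (ha (i-u) (by omega)).symm
      rw [e1, e2, e3]; ring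

lemma diff_nonneg (a b : ℕ → ℝ) (n m k : ℕ) (h2k : 2*k < n+m)
    (hapos : ∀ z, 0 ≤ a z) (hbpos : ∀ z, 0 ≤ b z)
    (hasym : ∀ j ≤ n, a j = a (n-j)) (hbsym : ∀ u ≤ m, b u = b (m-u))
    (hamono : ∀ t, 2*t < n → a t ≤ a (t+1)) (hbmono : ∀ u, 2*u < m → b u ≤ b (u+1))
    (hacmp : ∀ x y, y ≤ x → x + y ≤ n → a y ≤ a x)
    (hbcmp : ∀ x y, y ≤ x → x + y ≤ m → b y ≤ b x) :
    0 ≤ (∑ t ∈ range (n+1), ((k.choose t : ℝ) * ((n+m-1-k).choose (n-t) : ℝ))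
        * (a t * (b (k+1-t) - b (k-t))))
    + (∑ t ∈ range n, ((k.choose t : ℝ) * ((n+m-1-k).choose (n-1-t) : ℝ))
        * ((a (t+1) - a t) * b (k-t))) := by
  have hS1 : 0 ≤ ∑ t ∈ range n, ((k.choose t : ℝ) * ((n+m-1-k).choose (n-1-t) : ℝ))
      * ((a (t+1) - a t) * b (k-t)) := by
    apply key_nonneg n m k h2k (fun t => a (t+1) - a t) b
    · intro t htn
      have e1 : n-1-t+1 = n-t := by omega
      have e2 : a (n-t) = a t := (hasym t (by omega)).symm
      have e3 : a (n-1-t) = a (t+1) := by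
        have := hasym (n-1-t) (by omega)
        rw [show n-(n-1-t) = t+1 from by omega] at this
        exact this
      rw [e1, e2, e3]; ring
    · intro t h2t
      have := hamono t h2t; linarith
    · exact hbpos
    · exact hbcmp
  have hS2 : 0 ≤ ∑ t ∈ range (n+1), ((k.choose t : ℝ) * ((n+m-1-k).choose (n-t) : ℝ))
      * (a t * (b (k+1-t) - b (k-t))) := by
    rcases Nat.eq_zero_or_pos m with hm | hm
    · -- m = 0 : every term vanishes
      subst hm
      rw [Finset.sum_eq_zero]
      intro t ht
      rcases Nat.lt_or_ge k t with hkt | hkt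
      · rw [Nat.choose_eq_zero_of_lt hkt]; push_cast; ring
      · have h0 : (n+0-1-k).choose (n-t) = 0 := by
          apply Nat.choose_eq_zero_of_lt
          omega
        rw [h0]; push_cast; ring
    · -- rewrite the b-difference as Db (k-t)
      set Db : ℕ → ℝ := fun u => b (u+1) - b u with hDb
      have e0 : ∑ t ∈ range (n+1), ((k.choose t : ℝ) * ((n+m-1-k).choose (n-t) : ℝ))
            * (a t * (b (k+1-t) - b (k-t)))
          = ∑ t ∈ range (n+1), ((k.choose t : ℝ) * ((n+m-1-k).choose (n-t) : ℝ))
            * (a t * Db (k-t)) := by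
        apply Finset.sum_congr rfl
        intro t _
        rcases Nat.lt_or_ge k t with hkt | hkt
        · rw [Nat.choose_eq_zero_of_lt hkt]; push_cast; ring
        · rw [hDb]
          have : k+1-t = (k-t)+1 := by omega
          rw [this]
      rw [e0]
      have hswap := sum_swap a Db n (m-1) k (by omega)
      rw [show n+(m-1) - k = n+m-1-k from by omega, show (m-1)+1 = m from by omega] at hswap
      rw [hswap]
      have hkey := key_nonneg m n k (by omega) Db a ?_ ?_ hapos hacmp
      · rw [show m+n-1-k = n+m-1-k from by omega] at hkey
        exact hkey
      · intro u hum
        have e1 : m-1-u+1 = m-u := by omega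
        have e2 : b (m-u) = b u := (hbsym u (by omega)).symm
        have e3 : b (m-1-u) = b (u+1) := by
          have := hbsym (m-1-u) (by omega)
          rw [show m-(m-1-u) = u+1 from by omega] at this
          exact this
        simp only [hDb]
        rw [e1, e2, e3]; ring
      · intro u h2u
        have := hbmono u h2u
        simp only [hDb]; linarith
  linarith


theorem product_APU {n m : ℕ} (μ : (Fin n → Bool) → ℝ) (ν : (Fin m → Bool) → ℝ)
    (hμpos : ∀ η, 0 ≤ μ η) (hμsum : ∑ η : Fin n → Bool, μ η = 1)
    (hνpos : ∀ η, 0 ≤ ν η) (hνsum : ∑ η : Fin m → Bool, ν η = 1)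
    (hμ : UnimodalOn (gamma μ) n) (hν : UnimodalOn (gamma ν) m) :
    UnimodalOn (gammaProd μ ν) (n + m) := by
  set a : ℕ → ℝ := gamma μ with ha
  set b : ℕ → ℝ := gamma ν with hb
  have hasym : ∀ j ≤ n, a j = a (n-j) := fun j hj => gamma_symm μ hj
  have hbsym : ∀ u ≤ m, b u = b (m-u) := fun u hu => gamma_symm ν hu
  have hapos : ∀ z, 0 ≤ a z := gamma_nonneg μ hμpos
  have hbpos : ∀ z, 0 ≤ b z := gamma_nonneg ν hνpos
  have hamono : ∀ t, 2*t < n → a t ≤ a (t+1) := unimodal_halfmono a n hμ hasym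
  have hbmono : ∀ u, 2*u < m → b u ≤ b (u+1) := unimodal_halfmono b m hν hbsym
  have hacmp : ∀ x y, y ≤ x → x + y ≤ n → a y ≤ a x := half_mono_compare hasym hamono
  have hbcmp : ∀ x y, y ≤ x → x + y ≤ m → b y ≤ b x := half_mono_compare hbsym hbmono
  have ggmono : ∀ k, 2*k < n+m → gg a b n (n+m) k ≤ gg a b n (n+m) (k+1) := by
    intro k h2k
    have hd := gg_diff a b n m k (by omega)
    have hnn := diff_nonneg a b n m k h2k hapos hbpos hasym hbsym hamono hbmono hacmp hbcmp
    linarith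
  have ggsym : ∀ i ≤ n+m, gg a b n (n+m) i = gg a b n (n+m) ((n+m)-i) := by
    intro i hi
    exact gg_symm a b n m hasym hbsym hi
  have Emain : ∀ i ≤ n+m, gammaProd μ ν i = (((n+m).choose n : ℝ))⁻¹ * gg a b n (n+m) i :=
    fun i hi => gammaProd_eq μ ν hi
  have hinv : (0:ℝ) ≤ (((n+m).choose n : ℝ))⁻¹ := by positivity
  have gpmono : ∀ i, 2*i < n+m → gammaProd μ ν i ≤ gammaProd μ ν (i+1) := by
    intro i h2i
    rw [Emain i (by omega), Emain (i+1) (by omega)]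
    exact mul_le_mul_of_nonneg_left (ggmono i h2i) hinv
  refine ⟨(n+m+1)/2, by omega, ?_, ?_⟩
  · intro i hi
    exact gpmono i (by omega)
  · intro i hmo hiN
    rw [Emain i (by omega), Emain (i+1) (by omega)]
    have h1 : gg a b n (n+m) (i+1) = gg a b n (n+m) ((n+m)-(i+1)) := ggsym (i+1) (by omega)
    have h2 : gg a b n (n+m) i = gg a b n (n+m) ((n+m)-i) := ggsym i (by omega)
    have h3 : gg a b n (n+m) ((n+m)-(i+1)) ≤ gg a b n (n+m) ((n+m)-(i+1)+1) :=
      ggmono ((n+m)-(i+1)) (by omega)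
    rw [show (n+m)-(i+1)+1 = (n+m)-i from by omega] at h3
    apply mul_le_mul_of_nonneg_left _ hinv
    rw [h1, h2]
    exact h3
end

section
/- For an exchangeable probability measure on {0,1}^n, the properties ULC (the rank sequence is ultra-log-concave) and CAPU (every conditioned measure is antipodal pairs unimodal) are equivalent. -/
open Finset

/-- Total mass of the event that `η` agrees with `ξ` on the coordinates in `I`. -/
noncomputable def condZ {n : ℕ} (μ : (Fin n → Bool) → ℝ) (I : Finset (Fin n))
    (ξ : Fin n → Bool) : ℝ :=
  ∑ η ∈ univ.filter (fun η : Fin n → Bool => ∀ i ∈ I, η i = ξ i), μ η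

/-- Flip all coordinates outside `I`. -/
def flipOutside {n : ℕ} (I : Finset (Fin n)) (η : Fin n → Bool) : Fin n → Bool :=
  fun i => if i ∈ I then η i else !η i

/-- `γ_j` of the measure obtained from `μ` by conditioning on the values `ξ` of the
coordinates in `I`, regarded as a measure on the remaining `n - |I|` coordinates. -/
noncomputable def condGamma {n : ℕ} (μ : (Fin n → Bool) → ℝ) (I : Finset (Fin n))
    (ξ : Fin n → Bool) (j : ℕ) : ℝ :=
  (((n - I.card).choose j : ℝ))⁻¹ *
    ∑ η ∈ univ.filter (fun η : Fin n → Bool =>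
        (∀ i ∈ I, η i = ξ i) ∧ (univ.filter fun i => i ∉ I ∧ η i = true).card = j),
      (μ η / condZ μ I ξ) * (μ (flipOutside I η) / condZ μ I ξ)

/-- Rank sequence of `μ`. -/
noncomputable def rankSeq {n : ℕ} (μ : (Fin n → Bool) → ℝ) (i : ℕ) : ℝ :=
  ∑ η ∈ univ.filter (fun η : Fin n → Bool => wt η = i), μ η

/-!
An exchangeable `μ` is `a ∘ wt` with `a w = rankSeq μ w / n.choose w`. Conditioning on `k` ones
in `I` and leaving `m = n - #I` coordinates free gives `γ_j ∝ a (k + j) * a (k + m - j)`.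
When `a` is log-concave without internal zeros the ratios `a (w + 1) / a w` decrease, so these
antipodal products increase up to `m / 2` and, by the symmetry `j ↦ m - j`, decrease afterwards.
Conversely, the window `m = 2` at `k = i - 1` gives `a (i - 1) * a (i + 1) ≤ a i ^ 2`, and for
`a i, a m ≠ 0` the window from `i` to `m` has positive end products, so by unimodality none of its
products, hence no `a j` in between, vanishes.
-/

def LogConcaveSeq (a : ℕ → ℝ) (n : ℕ) : Prop :=
  ∀ i, 1 ≤ i → i ≤ n - 1 → a (i - 1) * a (i + 1) ≤ a i ^ 2

def NoInternalZeros (a : ℕ → ℝ) (n : ℕ) : Prop :=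
  ∀ i j m, i ≤ j → j ≤ m → m ≤ n → a i ≠ 0 → a m ≠ 0 → a j ≠ 0

lemma UnimodalOn.min_le {b : ℕ → ℝ} {n : ℕ} (h : UnimodalOn b n) {j : ℕ} (hj : j ≤ n) :
    min (b 0) (b n) ≤ b j := by
  obtain ⟨M, hMn, hinc, hdec⟩ := h
  have hmono : MonotoneOn b (Set.Icc 0 M) :=
    monotoneOn_of_le_add_one Set.ordConnected_Icc fun i _ _ hi => hinc i hi.2
  have hanti : AntitoneOn b (Set.Icc M n) :=
    antitoneOn_of_add_one_le Set.ordConnected_Icc fun i _ hi hi' => hdec i hi.1 hi'.2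
  rcases le_total j M with hjM | hMj
  · exact min_le_of_left_le (hmono ⟨le_rfl, Nat.zero_le M⟩ ⟨Nat.zero_le j, hjM⟩ (Nat.zero_le j))
  · exact min_le_of_right_le (hanti ⟨hMj, hj⟩ ⟨hMn, le_rfl⟩ hj)

lemma unimodalOn_iff_of_eq_div {b c : ℕ → ℝ} {n : ℕ} {z : ℝ} (hz : 0 < z)
    (h : ∀ j ≤ n, b j = c j / z) : UnimodalOn b n ↔ UnimodalOn c n := by
  have hle : ∀ i j, i ≤ n → j ≤ n → (b i ≤ b j ↔ c i ≤ c j) := fun i j hi hj => by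
    rw [h i hi, h j hj, div_le_div_iff_of_pos_right hz]
  refine exists_congr fun M => and_congr_right fun hM => and_congr ?_ ?_
  · exact forall_congr' fun i => imp_congr_right fun hi => hle _ _ (by omega) (by omega)
  · exact forall_congr' fun i => imp_congr_right fun _ =>
      imp_congr_right fun hi => hle _ _ (by omega) (by omega)

section Sequences

variable {a : ℕ → ℝ} {n : ℕ}

lemma noInternalZeros_congr {b : ℕ → ℝ} (h : ∀ w ≤ n, a w ≠ 0 ↔ b w ≠ 0) :
    NoInternalZeros a n ↔ NoInternalZeros b n := by
  refine ⟨fun ha i j m hij hjm hmn hi hm => ?_, fun hb i j m hij hjm hmn hi hm => ?_⟩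
  · exact (h j (by omega)).1 <|
      ha i j m hij hjm hmn ((h i (by omega)).2 hi) ((h m (by omega)).2 hm)
  · exact (h j (by omega)).2 <|
      hb i j m hij hjm hmn ((h i (by omega)).1 hi) ((h m (by omega)).1 hm)

lemma LogConcaveSeq.mul_le_mul_of_le (ha : ∀ w, 0 ≤ a w) (hlc : LogConcaveSeq a n)
    (hnz : NoInternalZeros a n) {u v : ℕ} (huv : u ≤ v) (hv : v + 1 ≤ n) :
    a u * a (v + 1) ≤ a (u + 1) * a v := by
  induction v, huv using Nat.le_induction with
  | base => rw [mul_comm]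
  | succ v huv ih =>
    have hlcv : a v * a (v + 2) ≤ a (v + 1) ^ 2 := by
      simpa using hlc (v + 1) (by omega) (by omega)
    rcases (ha (v + 1)).eq_or_lt with hzero | hpos
    · have : a u * a (v + 2) = 0 := by
        by_contra hne
        exact hnz u (v + 1) (v + 2) (by omega) (by omega) (by omega)
          (left_ne_zero_of_mul hne) (right_ne_zero_of_mul hne) hzero.symm
      rw [this]
      exact mul_nonneg (ha _) (ha _)
    · refine le_of_mul_le_mul_right ?_ hpos
      calc a u * a (v + 2) * a (v + 1) = a u * a (v + 1) * a (v + 2) := by ring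
        _ ≤ a (u + 1) * a v * a (v + 2) := mul_le_mul_of_nonneg_right (ih (by omega)) (ha _)
        _ = a (u + 1) * (a v * a (v + 2)) := by ring
        _ ≤ a (u + 1) * a (v + 1) ^ 2 := mul_le_mul_of_nonneg_left hlcv (ha _)
        _ = a (u + 1) * a (v + 1) * a (v + 1) := by ring

lemma LogConcaveSeq.unimodalOn_antipodal (ha : ∀ w, 0 ≤ a w) (hlc : LogConcaveSeq a n)
    (hnz : NoInternalZeros a n) {k m : ℕ} (hkm : k + m ≤ n) :
    UnimodalOn (fun j => a (k + j) * a (k + (m - j))) m := by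
  refine ⟨m / 2, Nat.div_le_self m 2, fun j hj => ?_, fun j hj hjm => ?_⟩
  · have := hlc.mul_le_mul_of_le ha hnz (u := k + j) (v := k + (m - (j + 1))) (by omega) (by omega)
    rwa [show k + (m - (j + 1)) + 1 = k + (m - j) by omega] at this
  · have := hlc.mul_le_mul_of_le ha hnz (u := k + (m - (j + 1))) (v := k + j) (by omega) (by omega)
    rw [show k + (m - (j + 1)) + 1 = k + (m - j) by omega] at this
    simpa only [mul_comm, add_assoc] using this

lemma logConcaveSeq_and_noInternalZeros_of_unimodalOn_antipodal (ha : ∀ w, 0 ≤ a w)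
    (h : ∀ k m, k + m ≤ n → 0 < a k → UnimodalOn (fun j => a (k + j) * a (k + (m - j))) m) :
    LogConcaveSeq a n ∧ NoInternalZeros a n := by
  refine ⟨fun i hi hin => ?_, fun i j m hij hjm hmn hai ham haj => ?_⟩
  · rcases (ha (i - 1)).eq_or_lt with hzero | hpos
    · rw [← hzero, zero_mul]; positivity
    · have := (h (i - 1) 2 (by omega) hpos).min_le (j := 1) (by omega)
      simpa only [show i - 1 + 1 = i by omega, show i - 1 + (2 - 0) = i + 1 by omega,
        show i - 1 + (2 - 2) = i - 1 by omega, show 2 - 1 = 1 by rfl, mul_comm (a (i + 1)),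
        min_self, ← sq] using this
  · have hpos_i := (ha i).lt_of_ne' hai
    have hpos_m := (ha m).lt_of_ne' ham
    have := (h i (m - i) (by omega) hpos_i).min_le (j := j - i) (by omega)
    simp only [show i + (j - i) = j by omega, haj, zero_mul, show i + (m - i - 0) = m by omega,
      show i + (m - i) = m by omega, show i + (m - i - (m - i)) = i by omega, add_zero] at this
    rcases min_le_iff.1 this with h1 | h1 <;> nlinarith [mul_pos hpos_i hpos_m]

end Sequences

section Cube

variable {n : ℕ}

lemma card_compl_fin (I : Finset (Fin n)) : #Iᶜ = n - #I := by
  simp [card_compl]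

lemma filter_notMem_and_eq_filter_compl (I : Finset (Fin n)) (η : Fin n → Bool) :
    ({i | i ∉ I ∧ η i = true} : Finset (Fin n)) = {i ∈ Iᶜ | η i = true} := by
  ext i; simp

lemma card_filter_agreeOn_ones_outside (I : Finset (Fin n)) (ξ : Fin n → Bool) (j : ℕ) :
    #{η : Fin n → Bool | (∀ i ∈ I, η i = ξ i) ∧ #{i | i ∉ I ∧ η i = true} = j} =
      (n - #I).choose j := by
  rw [← card_compl_fin, ← card_powersetCard]
  refine card_nbij' (fun η => {i ∈ Iᶜ | η i = true})
    (fun s i => if i ∈ I then ξ i else decide (i ∈ s)) ?_ ?_ ?_ ?_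
  · intro η hη
    simp only [coe_filter, mem_univ, true_and, Set.mem_ofPred_eq] at hη
    simp [mem_powersetCard, ← hη.2, filter_notMem_and_eq_filter_compl]
  · intro s hs
    simp only [mem_coe, mem_powersetCard] at hs
    simp only [coe_filter, mem_univ, true_and, Set.mem_ofPred_eq]
    refine ⟨fun i hi => by simp [hi], ?_⟩
    rw [← hs.2]
    congr 1
    ext i
    have := @hs.1 i
    by_cases hi : i ∈ I <;> simp_all
  · intro η hη
    simp only [coe_filter, mem_univ, true_and, Set.mem_ofPred_eq] at hη
    funext i
    by_cases hi : i ∈ I <;> simp [hi, hη.1]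
  · intro s hs
    simp only [mem_coe, mem_powersetCard] at hs
    ext i
    have := @hs.1 i
    by_cases hi : i ∈ I <;> simp_all

lemma wt_eq_of_agreeOn {I : Finset (Fin n)} {ξ η : Fin n → Bool} (h : ∀ i ∈ I, η i = ξ i) :
    wt η = #{i ∈ I | ξ i = true} + #{i | i ∉ I ∧ η i = true} := by
  rw [wt, ← card_filter_add_card_filter_not (· ∈ I)]
  congr 1
  · congr 1
    ext i
    simp only [mem_filter, mem_univ, true_and]
    exact ⟨fun ⟨hη, hi⟩ => ⟨hi, (h i hi).symm.trans hη⟩, fun ⟨hi, hξ⟩ => ⟨(h i hi).trans hξ, hi⟩⟩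
  · congr 1; ext i; simp [and_comm]

lemma card_ones_outside_flipOutside (I : Finset (Fin n)) (η : Fin n → Bool) :
    #{i | i ∉ I ∧ flipOutside I η i = true} = (n - #I) - #{i | i ∉ I ∧ η i = true} := by
  rw [filter_notMem_and_eq_filter_compl, filter_notMem_and_eq_filter_compl, ← card_compl_fin,
    ← card_filter_add_card_filter_not (s := Iᶜ) (fun i => η i = true), Nat.add_sub_cancel_left]
  congr 1
  ext i
  by_cases hi : i ∈ I <;> simp [flipOutside, hi]

end Cube

section Exchangeable

variable {n : ℕ} {μ : (Fin n → Bool) → ℝ} {a : ℕ → ℝ}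

lemma rankSeq_div_choose_wt (hexch : ∀ η η' : Fin n → Bool, wt η = wt η' → μ η = μ η')
    (η : Fin n → Bool) : rankSeq μ (wt η) / n.choose (wt η) = μ η := by
  have hrank : rankSeq μ (wt η) = n.choose (wt η) * μ η := by
    rw [rankSeq, sum_eq_card_nsmul fun η' hη' => hexch η' η (mem_filter.1 hη').2, nsmul_eq_mul]
    have hcard := card_filter_agreeOn_ones_outside ∅ η (wt η)
    simp only [notMem_empty, IsEmpty.forall_iff, implies_true, not_false_eq_true, true_and,
      card_empty, tsub_zero] at hcard
    exact congrArg (fun c : ℕ => (c : ℝ) * μ η) hcard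
  have hwt : wt η ≤ n := (card_le_univ _).trans (Fintype.card_fin n).le
  rw [hrank, mul_div_cancel_left₀ _ (by exact_mod_cast (Nat.choose_pos hwt).ne')]

lemma condGamma_eq (ha : ∀ η, μ η = a (wt η)) (I : Finset (Fin n)) (ξ : Fin n → Bool) {j : ℕ}
    (hj : j ≤ n - #I) :
    condGamma μ I ξ j = a (#{i ∈ I | ξ i = true} + j) *
      a (#{i ∈ I | ξ i = true} + (n - #I - j)) / condZ μ I ξ ^ 2 := by
  have hchoose : ((n - #I).choose j : ℝ) ≠ 0 := by exact_mod_cast (Nat.choose_pos hj).ne'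
  rw [condGamma, sum_eq_card_nsmul (b := a (#{i ∈ I | ξ i = true} + j) / condZ μ I ξ *
      (a (#{i ∈ I | ξ i = true} + (n - #I - j)) / condZ μ I ξ)) fun η hη => ?_,
    card_filter_agreeOn_ones_outside, nsmul_eq_mul]
  · field_simp
  · obtain ⟨hagree, hj⟩ := (mem_filter.1 hη).2
    have hflip : ∀ i ∈ I, flipOutside I η i = ξ i := fun i hi => by
      simp [flipOutside, hi, hagree i hi]
    rw [ha, ha, wt_eq_of_agreeOn hagree, wt_eq_of_agreeOn hflip, card_ones_outside_flipOutside, hj]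

lemma le_condZ (ha : ∀ η, μ η = a (wt η)) (ha0 : ∀ w, 0 ≤ a w) (I : Finset (Fin n))
    (ξ : Fin n → Bool) : a #{i ∈ I | ξ i = true} ≤ condZ μ I ξ := by
  let η₀ : Fin n → Bool := fun i => if i ∈ I then ξ i else false
  have hagree : ∀ i ∈ I, η₀ i = ξ i := fun i hi => if_pos hi
  have hη₀ : μ η₀ = a #{i ∈ I | ξ i = true} := by
    have hout : #{i | i ∉ I ∧ η₀ i = true} = 0 :=
      card_eq_zero.2 (filter_eq_empty_iff.2 fun i _ ⟨hiI, hi⟩ => by simp [η₀, hiI] at hi)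
    rw [ha, wt_eq_of_agreeOn hagree, hout, add_zero]
  rw [← hη₀, condZ]
  exact single_le_sum (fun η _ => (ha η).symm ▸ ha0 _) (mem_filter.2 ⟨mem_univ _, hagree⟩)

lemma exists_agreeOn_card {k m : ℕ} (hkm : k + m ≤ n) :
    ∃ (I : Finset (Fin n)) (ξ : Fin n → Bool), n - #I = m ∧ #{i ∈ I | ξ i = true} = k := by
  refine ⟨({i | (i : ℕ) < n - m} : Finset (Fin n)), fun i => decide ((i : ℕ) < k), ?_, ?_⟩
  · rw [Fin.card_filter_val_lt]
    omega
  · rw [filter_filter, filter_congr (q := fun i : Fin n => (i : ℕ) < k) fun i _ => by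
      simp only [decide_eq_true_eq]; omega,
      Fin.card_filter_val_lt]
    omega

end Exchangeable

theorem exchangeable_ULC_iff_CAPU_general {n : ℕ} (μ : (Fin n → Bool) → ℝ)
    (hpos : ∀ η, 0 ≤ μ η)
    (hexch : ∀ η η' : Fin n → Bool, wt η = wt η' → μ η = μ η') :
    ((∀ i, 1 ≤ i → i ≤ n - 1 →
        (rankSeq μ (i - 1) / (n.choose (i - 1) : ℝ)) *
            (rankSeq μ (i + 1) / (n.choose (i + 1) : ℝ)) ≤
          (rankSeq μ i / (n.choose i : ℝ)) ^ 2) ∧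
      (∀ i j m, i ≤ j → j ≤ m → m ≤ n →
        rankSeq μ i ≠ 0 → rankSeq μ m ≠ 0 → rankSeq μ j ≠ 0)) ↔
    (∀ (I : Finset (Fin n)) (ξ : Fin n → Bool), 0 < condZ μ I ξ →
      UnimodalOn (condGamma μ I ξ) (n - I.card)) := by
  set a : ℕ → ℝ := fun w => rankSeq μ w / n.choose w
  have hμ : ∀ η, μ η = a (wt η) := fun η => (rankSeq_div_choose_wt hexch η).symm
  have ha0 : ∀ w, 0 ≤ a w := fun w => div_nonneg (sum_nonneg fun η _ => hpos η) (Nat.cast_nonneg _)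
  have hzero : ∀ w ≤ n, a w ≠ 0 ↔ rankSeq μ w ≠ 0 := fun w hw =>
    not_congr (div_eq_zero_iff.trans (or_iff_left (by exact_mod_cast (Nat.choose_pos hw).ne')))
  change LogConcaveSeq a n ∧ NoInternalZeros (rankSeq μ) n ↔ _
  rw [← noInternalZeros_congr hzero]
  constructor
  · rintro ⟨hlc, hnz⟩ I ξ hZ
    rw [unimodalOn_iff_of_eq_div (pow_pos hZ 2) fun j hj => condGamma_eq hμ I ξ hj]
    have hk := card_filter_le I fun i => ξ i = true
    have hI := (card_le_univ I).trans_eq (Fintype.card_fin n)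
    exact hlc.unimodalOn_antipodal ha0 hnz (by omega)
  · intro hcapu
    refine logConcaveSeq_and_noInternalZeros_of_unimodalOn_antipodal ha0 fun k m hkm hak => ?_
    obtain ⟨I, ξ, rfl, rfl⟩ := exists_agreeOn_card hkm
    have hZ := hak.trans_le (le_condZ hμ ha0 I ξ)
    exact (unimodalOn_iff_of_eq_div (pow_pos hZ 2) fun j hj => condGamma_eq hμ I ξ hj).1
      (hcapu I ξ hZ)

theorem exchangeable_ULC_iff_CAPU {n : ℕ} (μ : (Fin n → Bool) → ℝ)
    (hpos : ∀ η, 0 ≤ μ η) (hsum : ∑ η : Fin n → Bool, μ η = 1)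
    (hexch : ∀ η η' : Fin n → Bool, wt η = wt η' → μ η = μ η') :
    ((∀ i, 1 ≤ i → i ≤ n - 1 →
        (rankSeq μ (i - 1) / (n.choose (i - 1) : ℝ)) *
            (rankSeq μ (i + 1) / (n.choose (i + 1) : ℝ)) ≤
          (rankSeq μ i / (n.choose i : ℝ)) ^ 2) ∧
      (∀ i j m, i ≤ j → j ≤ m → m ≤ n →
        rankSeq μ i ≠ 0 → rankSeq μ m ≠ 0 → rankSeq μ j ≠ 0)) ↔
    (∀ (I : Finset (Fin n)) (ξ : Fin n → Bool), 0 < condZ μ I ξ →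
      UnimodalOn (condGamma μ I ξ) (n - I.card)) :=
  exchangeable_ULC_iff_CAPU_general μ hpos hexch
end

section
/- Let M be a matroid of rank k+1 on a ground set E of size 2k having a coloop e. Then |Π_{k−1}(M)| = |Π_{k−1}(M∖e)| and |Π_k(M)| = 2|Π_{k−1}(M∖e)|, and consequently |Π_{k−1}(M)| ≤ (k/(k+1))|Π_k(M)|. -/
open scoped Matroid
/-- `Π_i(M)`: ordered partitions `(A, B)` of the ground set of `M` with `|A| = i` and
both parts independent. -/
def PiParts {α : Type*} (M : Matroid α) (i : ℕ) : Set (Set α × Set α) :=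
  {p | p.1 ∪ p.2 = M.E ∧ Disjoint p.1 p.2 ∧ p.1.ncard = i ∧
    M.Indep p.1 ∧ M.Indep p.2}

/-!
The second part `B` of a partition in `Π_{k-1}(M)` has `2k - (k - 1) = r(M)` elements,
so it is a basis and contains the coloop `e`; deleting `e` from `B` is a bijection
`Π_{k-1}(M) ≃ Π_{k-1}(M ∖ e)`, since `e` can be added to any independent set.
In `Π_k(M)` the coloop lies in either part, and swapping the parts (which exchanges
`Π_i` and `Π_{|E|-i}`) shows both cases are equally frequent. Those with `e` in the second
part correspond to `Π_k(M ∖ e)`, which swapping identifies with `Π_{k-1}(M ∖ e)` as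
`|E ∖ e| = 2k - 1`. The inequality then reduces to `k + 1 ≤ 2k`.
-/

open Set Matroid

section

variable {α : Type*} {M : Matroid α} {B I : Set α} {e : α} {i j : ℕ}

lemma Matroid.Indep.isBase_of_ncard_le (hI : M.Indep I) (hB : M.IsBase B) (hBfin : B.Finite)
    (h : B.ncard ≤ I.ncard) : M.IsBase I := by
  obtain ⟨B', hB', hIB'⟩ := hI.exists_isBase_superset
  rwa [eq_of_subset_of_ncard_le hIB' (hB'.ncard_eq_ncard_of_isBase hB ▸ h)
    (hB.finite_of_finite hBfin hB')]

lemma finite_piParts (hE : M.E.Finite) (i : ℕ) : (PiParts M i).Finite :=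
  (hE.finite_subsets.prod hE.finite_subsets).subset fun _ hp ↦
    ⟨hp.2.2.2.1.subset_ground, hp.2.2.2.2.subset_ground⟩

lemma add_ncard_snd_of_mem_piParts (hE : M.E.Finite) {p : Set α × Set α}
    (hp : p ∈ PiParts M i) : i + p.2.ncard = M.E.ncard := by
  obtain ⟨hu, hd, rfl, h₁, h₂⟩ := hp
  rw [← hu, ncard_union_eq hd (hE.subset h₁.subset_ground) (hE.subset h₂.subset_ground)]

lemma swap_mem_piParts (hE : M.E.Finite) (hij : i + j = M.E.ncard) {p : Set α × Set α}
    (hp : p ∈ PiParts M i) : p.swap ∈ PiParts M j := by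
  have hcard := add_ncard_snd_of_mem_piParts hE hp
  obtain ⟨hu, hd, -, h₁, h₂⟩ := hp
  exact ⟨by rwa [union_comm], hd.symm, by rw [Prod.fst_swap]; omega, h₂, h₁⟩

lemma swap_mem_piParts_iff (hE : M.E.Finite) (hij : i + j = M.E.ncard)
    {p : Set α × Set α} : p.swap ∈ PiParts M j ↔ p ∈ PiParts M i :=
  ⟨fun h ↦ swap_mem_piParts hE (j := i) (by omega) h, swap_mem_piParts hE hij⟩

lemma ncard_preimage_swap (s : Set (Set α × Set α)) : (Prod.swap ⁻¹' s).ncard = s.ncard :=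
  ncard_preimage_of_injective_subset_range Prod.swap_injective
    (by rw [Prod.swap_surjective.range_eq]; exact subset_univ s)

lemma ncard_piParts_eq_of_add_eq (hE : M.E.Finite) (hij : i + j = M.E.ncard) :
    (PiParts M i).ncard = (PiParts M j).ncard := by
  rw [← ncard_preimage_swap (PiParts M j)]
  congr 1
  ext p
  exact (swap_mem_piParts_iff hE hij).symm

lemma ncard_piParts_eq_two_mul (hE : M.E.Finite) (hi : i + i = M.E.ncard) (he : e ∈ M.E) :
    (PiParts M i).ncard = 2 * {p ∈ PiParts M i | e ∈ p.2}.ncard := by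
  have hsplit : PiParts M i = {p ∈ PiParts M i | e ∈ p.1} ∪ {p ∈ PiParts M i | e ∈ p.2} := by
    ext p
    refine ⟨fun hp ↦ ?_, fun hp ↦ hp.elim And.left And.left⟩
    have : e ∈ p.1 ∪ p.2 := hp.1 ▸ he
    exact this.imp (⟨hp, ·⟩) (⟨hp, ·⟩)
  have hdisj : Disjoint {p ∈ PiParts M i | e ∈ p.1} {p ∈ PiParts M i | e ∈ p.2} :=
    disjoint_left.2 fun _ h₁ h₂ ↦ disjoint_left.1 h₁.1.2.1 h₁.2 h₂.2
  have hswap : {p ∈ PiParts M i | e ∈ p.1} = Prod.swap ⁻¹' {p ∈ PiParts M i | e ∈ p.2} := by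
    ext p
    simp [swap_mem_piParts_iff hE hi]
  have hfin := finite_piParts hE i
  calc (PiParts M i).ncard
      = {p ∈ PiParts M i | e ∈ p.1}.ncard + {p ∈ PiParts M i | e ∈ p.2}.ncard := by
        rw [← ncard_union_eq hdisj (hfin.sep _) (hfin.sep _), ← hsplit]
    _ = 2 * {p ∈ PiParts M i | e ∈ p.2}.ncard := by rw [hswap, ncard_preimage_swap, two_mul]

namespace Matroid.IsColoop

lemma mem_snd_of_mem_piParts (he : M.IsColoop e) (hE : M.E.Finite) (hB : M.IsBase B)
    (hi : i + B.ncard = M.E.ncard) {p : Set α × Set α} (hp : p ∈ PiParts M i) : e ∈ p.2 := by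
  have hcard := add_ncard_snd_of_mem_piParts hE hp
  exact he.mem_of_isBase <|
    hp.2.2.2.2.isBase_of_ncard_le hB (hE.subset hB.subset_ground) (by omega)

lemma insert_snd_mem_piParts_iff (he : M.IsColoop e) {X Y : Set α} (heY : e ∉ Y) :
    (X, insert e Y) ∈ PiParts M i ↔ (X, Y) ∈ PiParts (M ＼ {e}) i := by
  simp only [PiParts, mem_ofPred_eq, delete_ground, delete_indep_iff, disjoint_singleton_right,
    disjoint_insert_right, union_insert]
  have hindep : M.Indep (insert e Y) ↔ M.Indep Y :=
    ⟨fun h ↦ h.subset (subset_insert e Y), he.insert_indep_of_indep⟩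
  constructor
  · rintro ⟨hu, ⟨heX, hd⟩, hc, hX, hY⟩
    refine ⟨?_, hd, hc, ⟨hX, heX⟩, hindep.1 hY, heY⟩
    rw [← hu, insert_sdiff_self_of_notMem (by simp [heX, heY])]
  · rintro ⟨hu, hd, hc, ⟨hX, heX⟩, hY, -⟩
    exact ⟨by rw [hu, insert_sdiff_self_of_mem he.mem_ground], ⟨heX, hd⟩, hc, hX, hindep.2 hY⟩

lemma ncard_piParts_delete (he : M.IsColoop e) (i : ℕ) :
    (PiParts (M ＼ {e}) i).ncard = {p ∈ PiParts M i | e ∈ p.2}.ncard := by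
  have hnot : ∀ p ∈ PiParts (M ＼ {e}) i, e ∉ p.2 := fun _ hp heY ↦
    (hp.2.2.2.2.subset_ground heY).2 rfl
  have himage : (fun p ↦ (p.1, insert e p.2)) '' PiParts (M ＼ {e}) i =
      {p ∈ PiParts M i | e ∈ p.2} := by
    ext ⟨A, B⟩
    constructor
    · rintro ⟨⟨X, Y⟩, hp, hXY⟩
      cases hXY
      exact ⟨(he.insert_snd_mem_piParts_iff (hnot _ hp)).2 hp, mem_insert e Y⟩
    · rintro ⟨hp, heB⟩
      refine ⟨(A, B \ {e}), (he.insert_snd_mem_piParts_iff fun h ↦ h.2 rfl).1 ?_, ?_⟩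
      · rwa [insert_sdiff_self_of_mem heB]
      · simp only [insert_sdiff_self_of_mem heB]
  rw [← himage, InjOn.ncard_image]
  rintro ⟨X₁, Y₁⟩ h₁ ⟨X₂, Y₂⟩ h₂ h
  simp only [Prod.mk.injEq] at h ⊢
  refine ⟨h.1, ?_⟩
  have heY₁ : e ∉ Y₁ := hnot _ h₁
  have heY₂ : e ∉ Y₂ := hnot _ h₂
  rw [← insert_sdiff_self_of_notMem heY₁, h.2, insert_sdiff_self_of_notMem heY₂]

end Matroid.IsColoop

end

theorem coloop_partition_count_general {α : Type*} (M : Matroid α) (k : ℕ)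
    (e : α) (hfin : M.E.Finite) (hE : M.E.ncard = 2 * k)
    (hrank : ∃ B, M.IsBase B ∧ B.ncard = k + 1)
    (hcoloop : e ∈ M.E ∧ ∀ B, M.IsBase B → e ∈ B) :
    (PiParts M (k - 1)).ncard = (PiParts (M ↾ (M.E \ {e})) (k - 1)).ncard ∧
    (PiParts M k).ncard = 2 * (PiParts (M ↾ (M.E \ {e})) (k - 1)).ncard ∧
    (k + 1) * (PiParts M (k - 1)).ncard ≤ k * (PiParts M k).ncard := by
  obtain ⟨heE, hbases⟩ := hcoloop
  obtain ⟨B, hB, hBcard⟩ := hrank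
  have he : M.IsColoop e := isColoop_iff_forall_mem_isBase.2 fun B hB ↦ hbases B hB
  have hk : 0 < k := by have := (ncard_pos hfin).2 ⟨e, heE⟩; omega
  have hE' : (M ＼ {e}).E.ncard = 2 * k - 1 := by
    rw [delete_ground, ncard_sdiff_singleton_of_mem heE, hE]
  have h₁ : (PiParts M (k - 1)).ncard = (PiParts (M ＼ {e}) (k - 1)).ncard := by
    rw [he.ncard_piParts_delete, sep_eq_self_iff_mem_true.2 fun p hp ↦
      he.mem_snd_of_mem_piParts hfin hB (by omega) hp]
  have h₂ : (PiParts M k).ncard = 2 * (PiParts (M ＼ {e}) (k - 1)).ncard := by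
    rw [ncard_piParts_eq_two_mul hfin (by omega) heE, ← he.ncard_piParts_delete,
      ncard_piParts_eq_of_add_eq hfin.sdiff (by omega : k + (k - 1) = _)]
  refine ⟨h₁, h₂, ?_⟩
  rw [h₁, h₂, ← mul_assoc, mul_comm k 2]
  exact Nat.mul_le_mul_right _ (by omega)

theorem coloop_partition_count {α : Type*} (M : Matroid α) (k : ℕ) (hk : 0 < k)
    (e : α) (hfin : M.E.Finite) (hE : M.E.ncard = 2 * k)
    (hrank : ∃ B, M.IsBase B ∧ B.ncard = k + 1)
    (hcoloop : e ∈ M.E ∧ ∀ B, M.IsBase B → e ∈ B) :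
    (PiParts M (k - 1)).ncard = (PiParts (M ↾ (M.E \ {e})) (k - 1)).ncard ∧
    (PiParts M k).ncard = 2 * (PiParts (M ↾ (M.E \ {e})) (k - 1)).ncard ∧
    (k + 1) * (PiParts M (k - 1)).ncard ≤ k * (PiParts M k).ncard :=
  coloop_partition_count_general M k e hfin hE hrank hcoloop
end
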